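/- Let L be a finite pure 2-dimensional flag simplicial complex on n vertices whose 1-skeleton L^(1) is connected, and suppose wsat(L^(1), K_3) = n − 1. Then there is a set T of 2-dimensional faces of L such that the complex obtained from L by removing the faces in T is collapsible. -/

import Mathlib

/-!
Let `G` be a weakly `K₃`-saturated subgraph of `L⁽¹⁾` with `n - 1` edges, the missing edges
`e₀, …, e_{m-1}` being added in this order, `eᵢ` closing a triangle `tᵢ`. The other two edges of
`tᵢ` lie in `G` or are earlier `eⱼ`, so by induction the endpoints of every `eᵢ` are joined in `G`:
`G` is connected, hence a spanning tree. Keep all vertices and edges of `L` but only the triangles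
`tᵢ` (faces of `L` since `L` is flag). For `k = m - 1, …, 0` the edge `eₖ` lies in no remaining
triangle but `tₖ`, so `tₖ` collapses through it; what is left is the tree `G`, which collapses to
a vertex leaf by leaf. The removed faces are triangles because `L` is pure of dimension 2.
-/

/-- A finite abstract simplicial complex on vertex type `V`: a finite family of
nonempty finite sets closed under taking nonempty subsets. -/
structure SComplex (V : Type*) where
  faces : Finset (Finset V)
  nonempty_mem : ∀ σ ∈ faces, σ.Nonempty
  down_closed : ∀ σ ∈ faces, ∀ τ, τ ⊆ σ → τ.Nonempty → τ ∈ faces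

namespace SComplex

variable {V : Type*}

/-- A facet is an inclusion-maximal face. -/
def IsFacet (K : SComplex V) (σ : Finset V) : Prop :=
  σ ∈ K.faces ∧ ∀ τ ∈ K.faces, σ ⊆ τ → σ = τ

/-- `K` is pure `d`-dimensional: `K` is nonempty and all facets have dimension `d`
(i.e. cardinality `d + 1`). -/
def PureDim (K : SComplex V) (d : ℕ) : Prop :=
  K.faces.Nonempty ∧ ∀ σ, K.IsFacet σ → σ.card = d + 1

/-- The 1-skeleton of a complex, regarded as a simple graph on `V`. -/
def skel1 [DecidableEq V] (K : SComplex V) : SimpleGraph V where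
  Adj u v := u ≠ v ∧ ({u, v} : Finset V) ∈ K.faces
  symm := by
    constructor
    intro u v h
    exact ⟨h.1.symm, by rw [Finset.pair_comm]; exact h.2⟩
  loopless := ⟨fun u h => h.1 rfl⟩

/-- `K` is shellable (as a pure `d`-dimensional complex): its facets can be ordered
`θ₁, …, θₘ` so that for every `i ≥ 2` the complex `K[θᵢ] ∩ K[θ₁, …, θ_{i-1}]` is pure
and `(d-1)`-dimensional, i.e. it is nonempty and all of its facets have cardinality `d`. -/
def Shellable (K : SComplex V) (d : ℕ) : Prop :=
  ∃ l : List (Finset V), l.Nodup ∧ (∀ σ, σ ∈ l ↔ K.IsFacet σ) ∧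
    ∀ i : Fin l.length, 1 ≤ i.val →
      ((∃ σ : Finset V, σ.Nonempty ∧ σ ⊆ l.get i ∧
          ∃ j : Fin l.length, j < i ∧ σ ⊆ l.get j) ∧
       ∀ σ : Finset V,
         (σ.Nonempty ∧ σ ⊆ l.get i ∧ ∃ j : Fin l.length, j < i ∧ σ ⊆ l.get j) →
         (∀ τ : Finset V,
            (τ.Nonempty ∧ τ ⊆ l.get i ∧ ∃ j : Fin l.length, j < i ∧ τ ⊆ l.get j) →
            σ ⊆ τ → σ = τ) →
         σ.card = d)

/-- `K'` arises from `K` by an elementary collapse: there is a face `τ` of `K` contained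
in a single facet `σ` distinct from `τ`, and `K'` is obtained from `K` by removing all
faces containing `τ`. -/
def ElemCollapse (K K' : SComplex V) : Prop :=
  ∃ τ σ : Finset V, τ ∈ K.faces ∧ K.IsFacet σ ∧ τ ≠ σ ∧ τ ⊆ σ ∧
    (∀ ρ, K.IsFacet ρ → τ ⊆ ρ → ρ = σ) ∧
    (∀ ρ, ρ ∈ K'.faces ↔ ρ ∈ K.faces ∧ ¬ τ ⊆ ρ)

/-- `K` collapses to `L` via a finite sequence of elementary collapses. -/
def CollapsesTo (K L : SComplex V) : Prop :=
  Relation.ReflTransGen ElemCollapse K L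

/-- `K` is collapsible: it collapses to a complex consisting of a single vertex. -/
def Collapsible (K : SComplex V) : Prop :=
  ∃ L : SComplex V, K.CollapsesTo L ∧ ∃ v : V, L.faces = {{v}}

/-- The reduced Euler characteristic `χ̃(K) = (Σᵢ (-1)^i fᵢ(K)) - 1`. -/
def redEuler (K : SComplex V) : ℤ :=
  (∑ σ ∈ K.faces, (-1 : ℤ) ^ (σ.card + 1)) - 1

/-- `K` is flag: every (nonempty) set of vertices of `K` that are pairwise joined by
edges of `K` is a face of `K`. -/
def Flag [DecidableEq V] (K : SComplex V) : Prop :=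
  ∀ C : Finset V, C.Nonempty → (∀ a ∈ C, ({a} : Finset V) ∈ K.faces) →
    (∀ a ∈ C, ∀ b ∈ C, a ≠ b → ({a, b} : Finset V) ∈ K.faces) → C ∈ K.faces

/-- The barycentric subdivision of `K`: vertices are the (nonempty) faces of `K`, and
faces are the nonempty collections of faces of `K` that form a chain under inclusion. -/
noncomputable def sd [DecidableEq V] (K : SComplex V) : SComplex (Finset V) := by
  classical
  exact
  { faces := K.faces.powerset.filter
      (fun C => C.Nonempty ∧ ∀ a ∈ C, ∀ b ∈ C, a ⊆ b ∨ b ⊆ a)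
    nonempty_mem := fun C hC => (Finset.mem_filter.mp hC).2.1
    down_closed := by
      intro C hC D hDC hD
      rw [Finset.mem_filter, Finset.mem_powerset] at hC ⊢
      exact ⟨hDC.trans hC.1, hD, fun a ha b hb => hC.2.2 a (hDC ha) b (hDC hb)⟩ }

end SComplex

/-- `es` is a witnessing sequence that `G` is weakly `K₃`-saturated in `F`:
`G` is a spanning subgraph of `F`, `es` is an ordering of the edges of `F` not in `G`,
and adding them one by one, each added edge completes a copy of `K₃` containing it. -/
def WitnessesWeakK3Sat {V : Type*} (F G : SimpleGraph V) (es : List (Sym2 V)) : Prop :=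
  G ≤ F ∧ es.Nodup ∧ (∀ e, e ∈ es ↔ e ∈ F.edgeSet \ G.edgeSet) ∧
    ∀ i : Fin es.length, ∃ x y z : V,
      es.get i = s(x, y) ∧
      (G ⊔ SimpleGraph.fromEdgeSet {e | e ∈ es.take (i.val + 1)}).Adj x y ∧
      (G ⊔ SimpleGraph.fromEdgeSet {e | e ∈ es.take (i.val + 1)}).Adj y z ∧
      (G ⊔ SimpleGraph.fromEdgeSet {e | e ∈ es.take (i.val + 1)}).Adj z x

/-- `G` is weakly `K₃`-saturated in `F`. -/
def WeaklyK3Saturated {V : Type*} (F G : SimpleGraph V) : Prop :=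
  ∃ es : List (Sym2 V), WitnessesWeakK3Sat F G es

/-- The weak saturation number `wsat(F, K₃)`: the minimum number of edges of a graph
weakly `K₃`-saturated in `F`. -/
noncomputable def wsatK3 (V : Type*) [Fintype V] (F : SimpleGraph V) : ℕ :=
  sInf {n | ∃ G : SimpleGraph V, WeaklyK3Saturated F G ∧ G.edgeSet.ncard = n}

attribute [ext] SComplex

namespace SComplex

variable {V : Type*}

theorem elemCollapse_of_free {K K' : SComplex V} {τ σ : Finset V} (hτ : τ ∈ K.faces)
    (hσ : σ ∈ K.faces) (hτσ : τ ⊂ σ) (hfree : ∀ ρ ∈ K.faces, τ ⊆ ρ → ρ ⊆ σ)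
    (hK' : ∀ ρ, ρ ∈ K'.faces ↔ ρ ∈ K.faces ∧ ¬ τ ⊆ ρ) : ElemCollapse K K' :=
  ⟨τ, σ, hτ, ⟨hσ, fun ρ hρ hσρ ↦ hσρ.antisymm (hfree ρ hρ (hτσ.subset.trans hσρ))⟩, hτσ.ne,
    hτσ.subset, fun ρ hρ hτρ ↦ hρ.2 σ hσ (hfree ρ hρ.1 hτρ), hK'⟩

theorem exists_isFacet_superset [DecidableEq V] (K : SComplex V) {σ : Finset V}
    (hσ : σ ∈ K.faces) : ∃ τ, K.IsFacet τ ∧ σ ⊆ τ := by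
  obtain ⟨τ, hτ, hmax⟩ :=
    (K.faces.filter (σ ⊆ ·)).exists_max_image Finset.card ⟨σ, Finset.mem_filter.2 ⟨hσ, le_rfl⟩⟩
  obtain ⟨hτ, hστ⟩ := Finset.mem_filter.1 hτ
  refine ⟨τ, ⟨hτ, fun ρ hρ hτρ ↦ ?_⟩, hστ⟩
  exact Finset.eq_of_subset_of_card_le hτρ (hmax ρ (Finset.mem_filter.2 ⟨hρ, hστ.trans hτρ⟩))

theorem PureDim.card_le [DecidableEq V] {K : SComplex V} {d : ℕ} (hK : K.PureDim d)
    {σ : Finset V} (hσ : σ ∈ K.faces) : σ.card ≤ d + 1 := by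
  obtain ⟨τ, hτ, hστ⟩ := K.exists_isFacet_superset hσ
  exact hK.2 τ hτ ▸ Finset.card_le_card hστ

theorem isClique_skel1_of_mem [DecidableEq V] {K : SComplex V} {σ : Finset V}
    (hσ : σ ∈ K.faces) : K.skel1.IsClique (σ : Set V) := fun _ ha _ hb hab ↦
  ⟨hab, K.down_closed σ hσ _ (Finset.insert_subset ha (Finset.singleton_subset_iff.2 hb))
    (Finset.insert_nonempty _ _)⟩

theorem Flag.mem_faces_of_isClique [DecidableEq V] {K : SComplex V} (hK : K.Flag)
    (hvert : ∀ v : V, ({v} : Finset V) ∈ K.faces) {C : Finset V} (hC : C.Nonempty)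
    (hclique : K.skel1.IsClique (C : Set V)) : C ∈ K.faces :=
  hK C hC (fun a _ ↦ hvert a) fun _ ha _ hb hab ↦ (hclique ha hb hab).2

variable [Fintype V]

open Classical in
noncomputable def ofLowerSet (s : Set (Finset V)) (hs : IsLowerSet s) : SComplex V where
  faces := Finset.univ.filter fun ρ ↦ ρ.Nonempty ∧ ρ ∈ s
  nonempty_mem _ hσ := (Finset.mem_filter.1 hσ).2.1
  down_closed _ hσ _ hτσ hτ :=
    Finset.mem_filter.2 ⟨Finset.mem_univ _, hτ, hs hτσ (Finset.mem_filter.1 hσ).2.2⟩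

@[simp]
theorem mem_ofLowerSet {s : Set (Finset V)} {hs : IsLowerSet s} {ρ : Finset V} :
    ρ ∈ (ofLowerSet s hs).faces ↔ ρ.Nonempty ∧ ρ ∈ s := by
  simp [ofLowerSet]

end SComplex

namespace SimpleGraph

variable {V : Type*} {H : SimpleGraph V} {u v : V}

theorem reachable_deleteEdges_of_leaf (hleaf : ∀ w, H.Adj v w → w = u) {a b : V} (ha : a ≠ v)
    (hb : b ≠ v) (h : H.Reachable a b) : (H.deleteEdges {s(v, u)}).Reachable a b := by
  obtain ⟨p, hp⟩ := h.exists_isPath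
  have hv : v ∉ p.support := hp.isTrail.not_mem_support_of_subsingleton_neighborSet ha.symm
    hb.symm fun w hw w' hw' ↦ (hleaf w hw).trans (hleaf w' hw').symm
  refine ⟨p.toDeleteEdges _ fun e he he' ↦ hv ?_⟩
  rw [Set.mem_singleton_iff] at he'
  exact p.fst_mem_support_of_mem_edges (he' ▸ he)

theorem isClique_deleteEdges_iff_of_notMem {s : Set V} (hv : v ∉ s) :
    (H.deleteEdges {s(v, u)}).IsClique s ↔ H.IsClique s := by
  refine ⟨fun h ↦ h.mono (H.deleteEdges_le _), fun h a ha b hb hab ↦ ?_⟩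
  refine (H.deleteEdges_adj ..).2 ⟨h ha hb hab, fun hab' ↦ ?_⟩
  rw [Set.mem_singleton_iff, Sym2.eq_iff] at hab'
  rcases hab' with ⟨rfl, -⟩ | ⟨-, rfl⟩
  exacts [hv ha, hv hb]

theorem exists_leaf_of_ncard_edgeSet_add_one_eq [Fintype V] {W : Finset V}
    (hsupp : ∀ a b, H.Adj a b → a ∈ W) (hreach : ∀ a ∈ W, ∀ b ∈ W, H.Reachable a b)
    (hW : 2 ≤ W.card) (hcard : H.edgeSet.ncard + 1 = W.card) :
    ∃ v ∈ W, ∃ u, H.Adj v u ∧ ∀ w, H.Adj v w → w = u := by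
  classical
  by_contra! hleaf
  have hdeg : ∀ v ∈ W, 2 ≤ H.degree v := by
    intro v hv
    obtain ⟨v', hv', hne⟩ := Finset.exists_mem_ne hW v
    obtain ⟨p⟩ := hreach v hv v' hv'
    have hu := p.adj_snd (Walk.not_nil_of_ne hne.symm)
    obtain ⟨w, hw, hwu⟩ := hleaf v hv _ hu
    rw [← card_neighborFinset_eq_degree]
    exact Finset.one_lt_card.2 ⟨w, by simpa using hw, _, by simpa using hu, hwu⟩
  have hsum : ∑ v, H.degree v = ∑ v ∈ W, H.degree v := by
    refine (Finset.sum_subset (Finset.subset_univ W) fun v _ hv ↦ ?_).symm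
    rw [← card_neighborFinset_eq_degree, Finset.card_eq_zero]
    exact Finset.eq_empty_of_forall_notMem fun u hu ↦ hv (hsupp v u (by simpa using hu))
  have hedges : H.edgeSet.ncard = H.edgeFinset.card := by
    rw [← Set.ncard_coe_finset, coe_edgeFinset]
  have := Finset.card_nsmul_le_sum W _ 2 hdeg
  rw [← hsum, sum_degrees_eq_twice_card_edges, smul_eq_mul] at this
  omega

end SimpleGraph

section GraphComplex

variable {V : Type*} [Fintype V] {W : Finset V} {H : SimpleGraph V}

noncomputable def graphComplex (W : Finset V) (H : SimpleGraph V) : SComplex V :=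
  .ofLowerSet {ρ | ρ ⊆ W ∧ ρ.card ≤ 2 ∧ H.IsClique (ρ : Set V)} fun _ _ hba h ↦
    ⟨hba.trans h.1, (Finset.card_le_card hba).trans h.2.1, h.2.2.subset (Finset.coe_subset.2 hba)⟩

theorem mem_graphComplex {ρ : Finset V} :
    ρ ∈ (graphComplex W H).faces ↔ ρ.Nonempty ∧ ρ ⊆ W ∧ ρ.card ≤ 2 ∧ H.IsClique (ρ : Set V) :=
  SComplex.mem_ofLowerSet

theorem graphComplex_singleton_faces (v : V) : (graphComplex {v} H).faces = {{v}} := by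
  ext ρ
  simp only [mem_graphComplex, Finset.mem_singleton]
  constructor
  · rintro ⟨hne, hsub, -⟩
    exact Finset.subset_singleton_iff.1 hsub |>.resolve_left hne.ne_empty
  · rintro rfl
    simp

theorem elemCollapse_graphComplex_erase_leaf [DecidableEq V] {u v : V} (hvW : v ∈ W)
    (huW : u ∈ W) (hvu : H.Adj v u) (hleaf : ∀ w, H.Adj v w → w = u) :
    (graphComplex W H).ElemCollapse (graphComplex (W.erase v) (H.deleteEdges {s(v, u)})) := by
  refine SComplex.elemCollapse_of_free (τ := {v}) (σ := {v, u}) ?_ ?_ ?_ ?_ fun ρ ↦ ?_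
  · simpa [mem_graphComplex] using hvW
  · refine mem_graphComplex.2 ⟨Finset.insert_nonempty _ _, Finset.insert_subset hvW
      (Finset.singleton_subset_iff.2 huW), Finset.card_le_two, ?_⟩
    rw [Finset.coe_pair]
    exact SimpleGraph.isClique_pair.2 fun _ ↦ hvu
  · rw [Finset.pair_comm]
    exact Finset.ssubset_insert (by simpa using hvu.ne')
  · intro ρ hρ hvρ w hw
    rw [Finset.singleton_subset_iff] at hvρ
    rcases eq_or_ne v w with rfl | hvw
    · exact Finset.mem_insert_self _ _
    · rw [hleaf w ((mem_graphComplex.1 hρ).2.2.2 hvρ hw hvw)]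
      exact Finset.mem_insert_of_mem (Finset.mem_singleton_self u)
  · simp only [mem_graphComplex, Finset.subset_erase, Finset.singleton_subset_iff]
    constructor
    · rintro ⟨hne, ⟨hW, hv⟩, hcard, hclique⟩
      exact ⟨⟨hne, hW, hcard, (H.isClique_deleteEdges_iff_of_notMem hv).1 hclique⟩, hv⟩
    · rintro ⟨⟨hne, hW, hcard, hclique⟩, hv⟩
      exact ⟨hne, ⟨hW, hv⟩, hcard, (H.isClique_deleteEdges_iff_of_notMem hv).2 hclique⟩

/-- `H` is a tree spanning `W`, which collapses to a vertex by removing a leaf at a time. -/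
theorem graphComplex_collapsible [DecidableEq V] (W : Finset V) (H : SimpleGraph V)
    (hsupp : ∀ a b, H.Adj a b → a ∈ W) (hreach : ∀ a ∈ W, ∀ b ∈ W, H.Reachable a b)
    (hcard : H.edgeSet.ncard + 1 = W.card) : (graphComplex W H).Collapsible := by
  induction W using Finset.strongInduction generalizing H with
  | H W ih =>
  obtain hW | hW : W.card = 1 ∨ 2 ≤ W.card := by omega
  · obtain ⟨v, rfl⟩ := Finset.card_eq_one.1 hW
    exact ⟨_, .refl, v, graphComplex_singleton_faces v⟩
  obtain ⟨v, hvW, u, hvu, hleaf⟩ := H.exists_leaf_of_ncard_edgeSet_add_one_eq hsupp hreach hW hcard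
  set H' := H.deleteEdges {s(v, u)}
  have hsupp' (a b : V) (hab' : H'.Adj a b) : a ∈ W.erase v := by
    obtain ⟨hab, hne⟩ := (H.deleteEdges_adj ..).1 hab'
    refine Finset.mem_erase.2 ⟨fun hav ↦ hne ?_, hsupp a b hab⟩
    rw [hav, hleaf b (hav ▸ hab), Set.mem_singleton_iff]
  have hreach' (a : V) (ha : a ∈ W.erase v) (b : V) (hb : b ∈ W.erase v) : H'.Reachable a b := by
    rw [Finset.mem_erase] at ha hb
    exact H.reachable_deleteEdges_of_leaf hleaf ha.1 hb.1 (hreach a ha.2 b hb.2)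
  have hcard' : H'.edgeSet.ncard + 1 = (W.erase v).card := by
    rw [SimpleGraph.edgeSet_deleteEdges, Finset.card_erase_of_mem hvW,
      Set.ncard_sdiff_singleton_of_mem (show s(v, u) ∈ H.edgeSet from hvu)]
    omega
  obtain ⟨K, hK, hK1⟩ := ih _ (Finset.erase_ssubset hvW) H' hsupp' hreach' hcard'
  exact ⟨K, .head (elemCollapse_graphComplex_erase_leaf hvW (hsupp u v hvu.symm) hvu hleaf) hK,
    hK1⟩

end GraphComplex

section WeakSaturation

variable {V : Type*} {F G : SimpleGraph V} {es : List (Sym2 V)}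

def prefixGraph (G : SimpleGraph V) (es : List (Sym2 V)) (k : ℕ) : SimpleGraph V :=
  G ⊔ SimpleGraph.fromEdgeSet {e | e ∈ es.take k}

@[simp]
theorem prefixGraph_zero : prefixGraph G es 0 = G := by
  simp [prefixGraph]

theorem prefixGraph_mono {k l : ℕ} (h : k ≤ l) : prefixGraph G es k ≤ prefixGraph G es l :=
  sup_le_sup_left (SimpleGraph.fromEdgeSet_mono fun _ he ↦ List.take_subset_take_left _ h he) _

theorem prefixGraph_adj_of_adj_succ {k : Fin es.length} {a b : V}
    (h : (prefixGraph G es (k + 1)).Adj a b) (hne : s(a, b) ≠ es.get k) :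
    (prefixGraph G es k).Adj a b := by
  simp only [prefixGraph, SimpleGraph.sup_adj, SimpleGraph.fromEdgeSet_adj, Set.mem_ofPred_eq,
    List.take_add_one, List.getElem?_eq_getElem k.isLt, Option.toList_some, List.mem_append,
    List.mem_singleton] at h ⊢
  rcases h with h | ⟨h | h, hab⟩
  exacts [.inl h, .inr ⟨h, hab⟩, (hne h).elim]

theorem not_adj_prefixGraph (hnodup : es.Nodup) (hG : ∀ e ∈ es, e ∉ G.edgeSet)
    (k : Fin es.length) {a b : V} (hk : es.get k = s(a, b)) : ¬ (prefixGraph G es k).Adj a b := by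
  rintro (h | ⟨h, -⟩)
  · exact hG _ (es.get_mem k) (hk ▸ h)
  · rw [Sym2.toRel_prop, Set.mem_ofPred_eq, ← hk] at h
    obtain ⟨j, hj, hjk⟩ := List.mem_take_iff_getElem.1 h
    have := hnodup.getElem_inj_iff.1 hjk
    omega

theorem WitnessesWeakK3Sat.prefixGraph_length (h : WitnessesWeakK3Sat F G es) :
    prefixGraph G es es.length = F := by
  ext a b
  simp only [prefixGraph, List.take_length, SimpleGraph.sup_adj, SimpleGraph.fromEdgeSet_adj,
    Set.mem_ofPred_eq, h.2.2.1, Set.mem_sdiff, SimpleGraph.mem_edgeSet]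
  exact ⟨fun h' ↦ h'.elim (@h.1 a b) (·.1.1), fun hF ↦ or_iff_not_imp_left.2 fun hG ↦
    ⟨⟨hF, hG⟩, hF.ne⟩⟩

theorem exists_weaklyK3Saturated_ncard_eq_wsatK3 [Fintype V] (F : SimpleGraph V) :
    ∃ G, WeaklyK3Saturated F G ∧ G.edgeSet.ncard = wsatK3 V F :=
  Nat.sInf_mem (s := {n | ∃ G, WeaklyK3Saturated F G ∧ G.edgeSet.ncard = n})
    ⟨_, F, ⟨[], le_rfl, List.nodup_nil, by simp, fun i ↦ i.elim0⟩, rfl⟩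

variable [DecidableEq V]

structure IsSaturatingTriangles (G : SimpleGraph V) (es : List (Sym2 V))
    (x y z : Fin es.length → V) : Prop where
  nodup : es.Nodup
  notMem_edgeSet : ∀ e ∈ es, e ∉ G.edgeSet
  get_eq : ∀ i, es.get i = s(x i, y i)
  isNClique : ∀ i : Fin es.length, (prefixGraph G es (i + 1)).IsNClique 3 {x i, y i, z i}

theorem WitnessesWeakK3Sat.exists_isSaturatingTriangles (h : WitnessesWeakK3Sat F G es) :
    ∃ x y z, IsSaturatingTriangles G es x y z := by
  choose x y z hxy hadj_xy hadj_yz hadj_zx using h.2.2.2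
  exact ⟨x, y, z, h.2.1, fun e he ↦ ((h.2.2.1 e).1 he).2, hxy,
    fun i ↦ SimpleGraph.is3Clique_triple_iff.2 ⟨hadj_xy i, (hadj_zx i).symm, hadj_yz i⟩⟩

namespace IsSaturatingTriangles

variable {x y z : Fin es.length → V}

theorem reachable_of_adj (h : IsSaturatingTriangles G es x y z) {k : ℕ} (hk : k ≤ es.length)
    {a b : V} (hab : (prefixGraph G es k).Adj a b) : G.Reachable a b := by
  induction k generalizing a b with
  | zero => exact (prefixGraph_zero ▸ hab).reachable
  | succ k ih =>
    let i : Fin es.length := ⟨k, hk⟩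
    obtain ⟨hxy, hxz, hyz⟩ := SimpleGraph.is3Clique_triple_iff.1 (h.isNClique i)
    obtain he | he := ne_or_eq s(a, b) (es.get i)
    · exact ih (by omega) (prefixGraph_adj_of_adj_succ hab he)
    have rxz : G.Reachable (x i) (z i) := ih (by omega) <|
      prefixGraph_adj_of_adj_succ hxz (by rw [h.get_eq]; simp [hyz.ne', hxy.ne])
    have ryz : G.Reachable (y i) (z i) := ih (by omega) <|
      prefixGraph_adj_of_adj_succ hyz (by rw [h.get_eq]; simp [hxy.ne', hxz.ne'])
    rw [h.get_eq, Sym2.eq_iff] at he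
    rcases he with ⟨rfl, rfl⟩ | ⟨rfl, rfl⟩
    exacts [rxz.trans ryz.symm, ryz.trans rxz.symm]

theorem connected (h : IsSaturatingTriangles G es x y z)
    (hconn : (prefixGraph G es es.length).Connected) : G.Connected := by
  have hle : (prefixGraph G es es.length).Reachable ≤ G.Reachable := by
    rw [SimpleGraph.reachable_eq_reflTransGen, G.reachable_eq_reflTransGen]
    exact Relation.reflTransGen_closed fun a b hab ↦
      G.reachable_eq_reflTransGen ▸ h.reachable_of_adj le_rfl hab
  have := hconn.nonempty
  exact ⟨fun a b ↦ hle a b (hconn.preconnected a b)⟩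

theorem isClique_prefixGraph_of_not_subset (h : IsSaturatingTriangles G es x y z)
    (k : Fin es.length) {ρ : Finset V} (hρ : (prefixGraph G es (k + 1)).IsClique (ρ : Set V))
    (hk : ¬ {x k, y k} ⊆ ρ) : (prefixGraph G es k).IsClique (ρ : Set V) := by
  intro a ha b hb hab
  refine prefixGraph_adj_of_adj_succ (hρ ha hb hab) fun he ↦ hk ?_
  rw [h.get_eq, Sym2.eq_iff] at he
  rcases he with ⟨rfl, rfl⟩ | ⟨rfl, rfl⟩
  · exact Finset.insert_subset ha (Finset.singleton_subset_iff.2 hb)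
  · exact Finset.insert_subset hb (Finset.singleton_subset_iff.2 ha)

end IsSaturatingTriangles

end WeakSaturation

section TriangleComplex

variable {V : Type*} [Fintype V] [DecidableEq V] {G : SimpleGraph V} {es : List (Sym2 V)}
  {x y z : Fin es.length → V} {k : ℕ} {ρ : Finset V}

noncomputable def triangleComplex (G : SimpleGraph V) (es : List (Sym2 V))
    (x y z : Fin es.length → V) (k : ℕ) : SComplex V :=
  .ofLowerSet {ρ | (ρ.card ≤ 2 ∧ (prefixGraph G es k).IsClique (ρ : Set V)) ∨
      ∃ i : Fin es.length, i.val < k ∧ ρ ⊆ {x i, y i, z i}} <| by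
    rintro σ ρ hρσ (⟨hcard, hclique⟩ | ⟨i, hi, hσ⟩)
    · exact .inl ⟨(Finset.card_le_card hρσ).trans hcard, hclique.subset (Finset.coe_subset.2 hρσ)⟩
    · exact .inr ⟨i, hi, hρσ.trans hσ⟩

theorem mem_triangleComplex :
    ρ ∈ (triangleComplex G es x y z k).faces ↔ ρ.Nonempty ∧
      ((ρ.card ≤ 2 ∧ (prefixGraph G es k).IsClique (ρ : Set V)) ∨
        ∃ i : Fin es.length, i.val < k ∧ ρ ⊆ {x i, y i, z i}) :=
  SComplex.mem_ofLowerSet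

theorem triangleComplex_faces_mono {l : ℕ} (hkl : k ≤ l) :
    (triangleComplex G es x y z k).faces ⊆ (triangleComplex G es x y z l).faces := by
  intro ρ hρ
  obtain ⟨hne, ⟨hcard, hclique⟩ | ⟨i, hi, hρi⟩⟩ := mem_triangleComplex.1 hρ
  · exact mem_triangleComplex.2 ⟨hne, .inl ⟨hcard, hclique.mono (prefixGraph_mono hkl)⟩⟩
  · exact mem_triangleComplex.2 ⟨hne, .inr ⟨i, hi.trans_le hkl, hρi⟩⟩

theorem triangleComplex_zero : triangleComplex G es x y z 0 = graphComplex Finset.univ G := by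
  ext ρ
  simp [mem_triangleComplex, mem_graphComplex]

namespace IsSaturatingTriangles

theorem isClique_of_mem_triangleComplex (h : IsSaturatingTriangles G es x y z)
    (hρ : ρ ∈ (triangleComplex G es x y z k).faces) :
    (prefixGraph G es k).IsClique (ρ : Set V) := by
  obtain ⟨-, ⟨-, hclique⟩ | ⟨i, hi, hρi⟩⟩ := mem_triangleComplex.1 hρ
  · exact hclique
  · exact ((h.isNClique i).isClique.subset (Finset.coe_subset.2 hρi)).mono (prefixGraph_mono hi)

theorem not_subset_of_mem_triangleComplex (h : IsSaturatingTriangles G es x y z) (k : Fin es.length)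
    (hρ : ρ ∈ (triangleComplex G es x y z k).faces) : ¬ {x k, y k} ⊆ ρ := by
  intro hk
  have hxy := (SimpleGraph.is3Clique_triple_iff.1 (h.isNClique k)).1.ne
  exact not_adj_prefixGraph h.nodup h.notMem_edgeSet k (h.get_eq k)
    (h.isClique_of_mem_triangleComplex hρ (hk (by simp)) (hk (by simp)) hxy)

theorem subset_of_mem_triangleComplex_succ (h : IsSaturatingTriangles G es x y z)
    (k : Fin es.length)
    (hρ : ρ ∈ (triangleComplex G es x y z (k + 1)).faces) (hkρ : {x k, y k} ⊆ ρ) :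
    ρ ⊆ {x k, y k, z k} := by
  obtain ⟨hne, ⟨hcard, -⟩ | ⟨i, hi, hρi⟩⟩ := mem_triangleComplex.1 hρ
  · have hxy := (SimpleGraph.is3Clique_triple_iff.1 (h.isNClique k)).1.ne
    rw [← Finset.eq_of_subset_of_card_le hkρ (hcard.trans (Finset.card_pair hxy).ge)]
    simp [Finset.insert_subset_iff]
  obtain hik | hik := Nat.lt_succ_iff_lt_or_eq.1 hi
  · exact absurd hkρ (h.not_subset_of_mem_triangleComplex k
      (mem_triangleComplex.2 ⟨hne, .inr ⟨i, hik, hρi⟩⟩))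
  · rwa [← Fin.ext hik]

theorem mem_triangleComplex_of_mem_succ (h : IsSaturatingTriangles G es x y z) (k : Fin es.length)
    (hρ : ρ ∈ (triangleComplex G es x y z (k + 1)).faces) (hkρ : ¬ {x k, y k} ⊆ ρ) :
    ρ ∈ (triangleComplex G es x y z k).faces := by
  obtain ⟨hne, ⟨hcard, hclique⟩ | ⟨i, hi, hρi⟩⟩ := mem_triangleComplex.1 hρ
  · exact mem_triangleComplex.2
      ⟨hne, .inl ⟨hcard, h.isClique_prefixGraph_of_not_subset k hclique hkρ⟩⟩
  obtain hik | hik := Nat.lt_succ_iff_lt_or_eq.1 hi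
  · exact mem_triangleComplex.2 ⟨hne, .inr ⟨i, hik, hρi⟩⟩
  obtain rfl := Fin.ext hik
  have htri := h.isNClique i
  have hcard : ρ.card < 3 := by
    rw [← htri.card_eq]
    refine Finset.card_lt_card (Finset.ssubset_iff_subset_ne.2 ⟨hρi, fun he ↦ hkρ ?_⟩)
    simp [he, Finset.insert_subset_iff]
  have hclique := htri.isClique.subset (Finset.coe_subset.2 hρi)
  exact mem_triangleComplex.2
    ⟨hne, .inl ⟨by omega, h.isClique_prefixGraph_of_not_subset i hclique hkρ⟩⟩

theorem elemCollapse_triangleComplex_succ (h : IsSaturatingTriangles G es x y z)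
    (k : Fin es.length) :
    (triangleComplex G es x y z (k + 1)).ElemCollapse (triangleComplex G es x y z k) := by
  have hσ : {x k, y k, z k} ∈ (triangleComplex G es x y z (k + 1)).faces :=
    mem_triangleComplex.2 ⟨Finset.insert_nonempty _ _, .inr ⟨k, k.val.lt_succ_self, le_rfl⟩⟩
  refine SComplex.elemCollapse_of_free (τ := {x k, y k}) (σ := {x k, y k, z k}) ?_ hσ ?_
    (fun _ ↦ h.subset_of_mem_triangleComplex_succ k) fun ρ ↦
      ⟨fun hρ ↦ ⟨triangleComplex_faces_mono k.val.le_succ hρ,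
        h.not_subset_of_mem_triangleComplex k hρ⟩,
      fun hρ ↦ h.mem_triangleComplex_of_mem_succ k hρ.1 hρ.2⟩
  · exact (triangleComplex G es x y z _).down_closed _ hσ _
      (by simp [Finset.insert_subset_iff]) (Finset.insert_nonempty _ _)
  · obtain ⟨-, hxz, hyz⟩ := SimpleGraph.is3Clique_triple_iff.1 (h.isNClique k)
    exact Finset.ssubset_iff.2 ⟨z k, by simp [hxz.ne', hyz.ne'], by simp [Finset.insert_subset_iff]⟩

theorem triangleComplex_collapsesTo_zero (h : IsSaturatingTriangles G es x y z)
    (hk : k ≤ es.length) :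
    (triangleComplex G es x y z k).CollapsesTo (triangleComplex G es x y z 0) := by
  induction k with
  | zero => exact .refl
  | succ k ih => exact .head (h.elemCollapse_triangleComplex_succ ⟨k, hk⟩) (ih (by omega))

theorem triangleComplex_collapsible (h : IsSaturatingTriangles G es x y z)
    (hconn : (prefixGraph G es es.length).Connected)
    (hcard : G.edgeSet.ncard + 1 = Fintype.card V) :
    (triangleComplex G es x y z es.length).Collapsible := by
  have hG := h.connected hconn
  obtain ⟨K, hK, hK1⟩ := graphComplex_collapsible Finset.univ G
    (fun a _ _ ↦ Finset.mem_univ a) (fun a _ b _ ↦ hG.preconnected a b) hcard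
  have hKG := h.triangleComplex_collapsesTo_zero le_rfl
  rw [triangleComplex_zero] at hKG
  exact ⟨K, hKG.trans hK, hK1⟩

end IsSaturatingTriangles

end TriangleComplex

/-- If `L` is a finite pure 2-dimensional flag complex on `n` vertices whose
1-skeleton is connected and `wsat(L⁽¹⁾, K₃) = n - 1`, then `L` becomes collapsible after
removing some set of 2-dimensional faces. -/
theorem collapsible_after_removing_triangles_of_wsat {V : Type*} [Fintype V] [DecidableEq V]
    (L : SComplex V) (hvert : ∀ v : V, ({v} : Finset V) ∈ L.faces)
    (hpure : L.PureDim 2) (hflag : L.Flag)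
    (hconn : L.skel1.Connected)
    (hwsat : wsatK3 V L.skel1 = Fintype.card V - 1) :
    ∃ T : Finset (Finset V), T ⊆ L.faces ∧ (∀ σ ∈ T, σ.card = 3) ∧
      ∃ L' : SComplex V, (∀ ρ, ρ ∈ L'.faces ↔ ρ ∈ L.faces ∧ ρ ∉ T) ∧ L'.Collapsible := by
  obtain ⟨G, ⟨es, hes⟩, hcard⟩ := exists_weaklyK3Saturated_ncard_eq_wsatK3 L.skel1
  obtain ⟨x, y, z, h⟩ := hes.exists_isSaturatingTriangles
  have hF := hes.prefixGraph_length
  set M := triangleComplex G es x y z es.length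
  have hV := Fintype.card_pos_iff.2 hconn.nonempty
  have hM : M.Collapsible := h.triangleComplex_collapsible (hF ▸ hconn) (by omega)
  have hML : M.faces ⊆ L.faces := fun ρ hρ ↦ hflag.mem_faces_of_isClique hvert
    (M.nonempty_mem ρ hρ) (hF ▸ h.isClique_of_mem_triangleComplex hρ)
  have hLM (ρ : Finset V) (hρ : ρ ∈ L.faces) (hcard : ρ.card ≤ 2) : ρ ∈ M.faces :=
    mem_triangleComplex.2
      ⟨L.nonempty_mem ρ hρ, .inl ⟨hcard, hF ▸ SComplex.isClique_skel1_of_mem hρ⟩⟩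
  refine ⟨L.faces \ M.faces, Finset.sdiff_subset, fun σ hσ ↦ ?_, M, fun ρ ↦ ?_, hM⟩
  · obtain ⟨hσL, hσM⟩ := Finset.mem_sdiff.1 hσ
    have := hpure.card_le hσL
    by_contra hne
    exact hσM (hLM σ hσL (by omega))
  · rw [Finset.mem_sdiff, not_and_not_right]
    exact ⟨fun hρ ↦ ⟨hML hρ, fun _ ↦ hρ⟩, fun ⟨hρ, hρM⟩ ↦ hρM hρ⟩
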